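/- arXiv:1906.03949 — 7 statements merged into one kernel-verified Lean document; each statement's English description precedes it below -/
import Mathlib

section
/- Let p > 0, σ² > 0, β_sd > 0, β_sr ≥ 0, β_rd ≥ 0 with β_sd > β_sr. Then for every p₁, p₂ ≥ 0 satisfying p₁ + p₂ = 2p, it holds that (1/2)·log₂(1 + min(p₁ β_sr, p₁ β_sd + p₂ β_rd) / σ²) < log₂(1 + p β_sd / σ²). That is, the SISO rate strictly exceeds the repetition-coded DF relaying rate for any power allocation with the same average power p. -/
/-- Proposition 1, first case: if the direct channel is stronger than the
source-relay channel (`β_sd > β_sr`), then for every power allocation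
`p₁, p₂ ≥ 0` with `p₁ + p₂ = 2p`, the SISO rate strictly exceeds the
repetition-coded DF relaying rate. -/
theorem siso_beats_df_when_direct_stronger
    (p σ2 βsd βsr βrd : ℝ)
    (hp : 0 < p) (hσ : 0 < σ2) (hsd : 0 < βsd) (hsr : 0 ≤ βsr) (hrd : 0 ≤ βrd)
    (hlt : βsr < βsd) :
    ∀ p1 p2 : ℝ, 0 ≤ p1 → 0 ≤ p2 → p1 + p2 = 2 * p →
      (1 / 2) * Real.logb 2 (1 + min (p1 * βsr) (p1 * βsd + p2 * βrd) / σ2)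
        < Real.logb 2 (1 + p * βsd / σ2) := by
  intro p1 p2 h1 h2 hsum
  set m := min (p1 * βsr) (p1 * βsd + p2 * βrd) with hm
  have hm0 : 0 ≤ m := le_min (mul_nonneg h1 hsr)
    (add_nonneg (mul_nonneg h1 hsd.le) (mul_nonneg h2 hrd))
  have hmle : m ≤ 2 * p * βsr := by
    refine (min_le_left _ _).trans ?_
    nlinarith
  have hx0 : (0:ℝ) < 1 + m / σ2 := by positivity
  have h1' : 1 + m / σ2 ≤ 1 + 2 * p * βsr / σ2 := by
    gcongr
  have h2' : 1 + 2 * p * βsr / σ2 < (1 + p * βsd / σ2) ^ 2 := by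
    have hb : 0 < p * βsd / σ2 := by positivity
    have ha : p * βsr / σ2 < p * βsd / σ2 := by
      apply (div_lt_div_iff_of_pos_right hσ).mpr
      nlinarith
    have hexp : (1 + p * βsd / σ2) ^ 2 = 1 + 2 * (p * βsd / σ2) + (p * βsd / σ2) ^ 2 := by
      ring
    have h2a : 2 * p * βsr / σ2 = 2 * (p * βsr / σ2) := by ring
    rw [hexp, h2a]
    nlinarith [sq_nonneg (p * βsd / σ2)]
  have step1 : Real.logb 2 (1 + m / σ2) ≤ Real.logb 2 (1 + 2 * p * βsr / σ2) :=
    Real.logb_le_logb_of_le one_lt_two hx0 h1'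
  have step2 : Real.logb 2 (1 + 2 * p * βsr / σ2) <
      Real.logb 2 ((1 + p * βsd / σ2) ^ 2) :=
    Real.logb_lt_logb one_lt_two (by positivity) h2'
  have hpow : Real.logb 2 ((1 + p * βsd / σ2) ^ 2)
      = 2 * Real.logb 2 (1 + p * βsd / σ2) := by
    rw [Real.logb_pow]; ring
  have := lt_of_le_of_lt step1 step2
  rw [hpow] at this
  linarith
end

section
/- Let p > 0 and β_sd, β_sr, β_rd > 0 with β_sd ≤ β_sr and β_sd ≤ β_rd, and set D = β_sr + β_rd − β_sd (> 0). Then the pair p₁* = 2p β_rd / D, p₂* = 2p (β_sr − β_sd) / D is feasible (p₁*, p₂* ≥ 0 and p₁* + p₂* = 2p) and the value 2p β_rd β_sr / D is the greatest element (IsGreatest) of the set { min(p₁ β_sr, p₁ β_sd + p₂ β_rd) : p₁ ≥ 0, p₂ ≥ 0, p₁ + p₂ = 2p }, attained at (p₁*, p₂*). Consequently, the maximal DF relaying rate under average power p is (1/2)·log₂(1 + 2p β_rd β_sr /(D σ²)). -/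
/-- Proposition 1, second case: for `β_sd ≤ β_sr` (and `β_sd ≤ β_rd`), the
allocation `p₁* = 2p β_rd / D`, `p₂* = 2p(β_sr − β_sd)/D`, with
`D = β_sr + β_rd − β_sd`, is feasible and maximizes
`min(p₁ β_sr, p₁ β_sd + p₂ β_rd)` over all feasible allocations, with optimal
value `2p β_rd β_sr / D`; consequently the maximal repetition-coded DF relaying
rate under average power `p` is `(1/2)·log₂(1 + 2p β_rd β_sr /(D σ²))`. -/
theorem df_optimal_power_allocation
    (p βsd βsr βrd : ℝ) (hp : 0 < p)
    (hsd : 0 < βsd) (hsr : 0 < βsr) (hrd : 0 < βrd)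
    (h1 : βsd ≤ βsr) (h2 : βsd ≤ βrd) :
    (0 ≤ 2 * p * βrd / (βsr + βrd - βsd) ∧
      0 ≤ 2 * p * (βsr - βsd) / (βsr + βrd - βsd) ∧
      2 * p * βrd / (βsr + βrd - βsd) + 2 * p * (βsr - βsd) / (βsr + βrd - βsd)
        = 2 * p) ∧
    (min ((2 * p * βrd / (βsr + βrd - βsd)) * βsr)
        ((2 * p * βrd / (βsr + βrd - βsd)) * βsd +
          (2 * p * (βsr - βsd) / (βsr + βrd - βsd)) * βrd)
      = 2 * p * βrd * βsr / (βsr + βrd - βsd)) ∧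
    IsGreatest
      { v : ℝ | ∃ p1 p2 : ℝ, 0 ≤ p1 ∧ 0 ≤ p2 ∧ p1 + p2 = 2 * p ∧
          v = min (p1 * βsr) (p1 * βsd + p2 * βrd) }
      (2 * p * βrd * βsr / (βsr + βrd - βsd)) ∧
    (∀ σ2 : ℝ, 0 < σ2 →
      IsGreatest
        { R : ℝ | ∃ p1 p2 : ℝ, 0 ≤ p1 ∧ 0 ≤ p2 ∧ p1 + p2 = 2 * p ∧
            R = (1 / 2) * Real.logb 2
                  (1 + min (p1 * βsr) (p1 * βsd + p2 * βrd) / σ2) }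
        ((1 / 2) * Real.logb 2
          (1 + 2 * p * βrd * βsr / ((βsr + βrd - βsd) * σ2)))) := by
  have hD : 0 < βsr + βrd - βsd := by linarith
  have hDne : (βsr + βrd - βsd) ≠ 0 := ne_of_gt hD
  have hf1 : 0 ≤ 2 * p * βrd / (βsr + βrd - βsd) := by positivity
  have hf2 : 0 ≤ 2 * p * (βsr - βsd) / (βsr + βrd - βsd) := by
    apply div_nonneg _ hD.le
    nlinarith
  have hsum : 2 * p * βrd / (βsr + βrd - βsd)
      + 2 * p * (βsr - βsd) / (βsr + βrd - βsd) = 2 * p := by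
    field_simp
    ring
  have e1 : (2 * p * βrd / (βsr + βrd - βsd)) * βsr
      = 2 * p * βrd * βsr / (βsr + βrd - βsd) := by ring
  have e2 : (2 * p * βrd / (βsr + βrd - βsd)) * βsd +
      (2 * p * (βsr - βsd) / (βsr + βrd - βsd)) * βrd
      = 2 * p * βrd * βsr / (βsr + βrd - βsd) := by
    field_simp
    ring
  have hmin : min ((2 * p * βrd / (βsr + βrd - βsd)) * βsr)
        ((2 * p * βrd / (βsr + βrd - βsd)) * βsd +
          (2 * p * (βsr - βsd) / (βsr + βrd - βsd)) * βrd)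
      = 2 * p * βrd * βsr / (βsr + βrd - βsd) := by
    rw [e1, e2, min_self]
  -- upper bound on the min over feasible allocations
  have hub : ∀ p1 p2 : ℝ, 0 ≤ p1 → 0 ≤ p2 → p1 + p2 = 2 * p →
      min (p1 * βsr) (p1 * βsd + p2 * βrd)
        ≤ 2 * p * βrd * βsr / (βsr + βrd - βsd) := by
    intro p1 p2 hp1 hp2 hs
    have hp2' : p2 = 2 * p - p1 := by linarith
    subst hp2'
    rcases le_or_gt p1 (2 * p * βrd / (βsr + βrd - βsd)) with h | h
    · apply min_le_of_left_le
      rw [le_div_iff₀ hD] at h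
      rw [le_div_iff₀ hD]
      nlinarith
    · apply min_le_of_right_le
      rw [div_lt_iff₀ hD] at h
      rw [le_div_iff₀ hD]
      have key : (βrd - βsd) * (2 * p * βrd) ≤ (βrd - βsd) * (p1 * (βsr + βrd - βsd)) :=
        mul_le_mul_of_nonneg_left h.le (by linarith)
      nlinarith [key]
  have hgr : IsGreatest
      { v : ℝ | ∃ p1 p2 : ℝ, 0 ≤ p1 ∧ 0 ≤ p2 ∧ p1 + p2 = 2 * p ∧
          v = min (p1 * βsr) (p1 * βsd + p2 * βrd) }
      (2 * p * βrd * βsr / (βsr + βrd - βsd)) := by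
    constructor
    · exact ⟨_, _, hf1, hf2, hsum, hmin.symm⟩
    · rintro v ⟨p1, p2, hp1, hp2, hs, rfl⟩
      exact hub p1 p2 hp1 hp2 hs
  refine ⟨⟨hf1, hf2, hsum⟩, hmin, hgr, ?_⟩
  intro σ2 hσ
  have hkey : 2 * p * βrd * βsr / ((βsr + βrd - βsd) * σ2)
      = (2 * p * βrd * βsr / (βsr + βrd - βsd)) / σ2 := by
    rw [div_div]
  constructor
  · exact ⟨_, _, hf1, hf2, hsum, by rw [hmin, hkey]⟩
  · rintro R ⟨p1, p2, hp1, hp2, hs, rfl⟩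
    have hv0 : 0 ≤ min (p1 * βsr) (p1 * βsd + p2 * βrd) :=
      le_min (by positivity) (by positivity)
    have hle := hub p1 p2 hp1 hp2 hs
    rw [hkey]
    apply mul_le_mul_of_nonneg_left _ (by norm_num : (0:ℝ) ≤ 1/2)
    apply Real.logb_le_logb_of_le (by norm_num : (1:ℝ) < 2) (by positivity)
    have : min (p1 * βsr) (p1 * βsd + p2 * βrd) / σ2
          ≤ (2 * p * βrd * βsr / (βsr + βrd - βsd)) / σ2 :=
      by gcongr
    linarith
end

section
/- Let p > 0, σ² > 0, α ≥ 0, β_IRS ≥ 0, β_rd ≥ 0, and β_sd > β_sr ≥ 0 with β_sd > 0. Then for every natural number N ≥ 0 and every p₁, p₂ ≥ 0 with p₁ + p₂ = 2p, it holds that log₂(1 + p(√β_sd + N α √β_IRS)² / σ²) > (1/2)·log₂(1 + min(p₁ β_sr, p₁ β_sd + p₂ β_rd) / σ²). That is, when β_sd > β_sr, the IRS-supported transmission provides a higher rate than DF relaying for any number of elements and any relay power allocation with average power p. -/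
/-- Proposition 2, first case: when `β_sd > β_sr`, the IRS-supported
transmission rate `log₂(1 + p(√β_sd + Nα√β_IRS)²/σ²)` exceeds the
repetition-coded DF relaying rate for any number of elements `N ≥ 0` and any
power allocation `p₁, p₂ ≥ 0` with `p₁ + p₂ = 2p`. -/
theorem irs_beats_df_when_direct_stronger
    (p σ2 α βIRS βrd βsd βsr : ℝ)
    (hp : 0 < p) (hσ : 0 < σ2) (hα : 0 ≤ α) (hIRS : 0 ≤ βIRS)
    (hrd : 0 ≤ βrd) (hsr : 0 ≤ βsr) (hsd : 0 < βsd) (hlt : βsr < βsd) :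
    ∀ N : ℕ, ∀ p1 p2 : ℝ, 0 ≤ p1 → 0 ≤ p2 → p1 + p2 = 2 * p →
      Real.logb 2 (1 + p * (Real.sqrt βsd + (N : ℝ) * α * Real.sqrt βIRS) ^ 2 / σ2)
        > (1 / 2) * Real.logb 2
            (1 + min (p1 * βsr) (p1 * βsd + p2 * βrd) / σ2) := by
  intro N p1 p2 hp1 hp2 hsum
  have hb : (1:ℝ) < 2 := one_lt_two
  set A : ℝ := Real.sqrt βsd + (N : ℝ) * α * Real.sqrt βIRS with hA
  have hsq : Real.sqrt βsd ≤ A := by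
    have : 0 ≤ (N : ℝ) * α * Real.sqrt βIRS := by positivity
    linarith
  have hsq0 : 0 ≤ Real.sqrt βsd := Real.sqrt_nonneg _
  have hA2 : βsd ≤ A ^ 2 := by
    have h1 : Real.sqrt βsd ^ 2 ≤ A ^ 2 := by nlinarith
    rwa [Real.sq_sqrt hsd.le] at h1
  -- the min is bounded above by 2 p βsr
  have hmin : min (p1 * βsr) (p1 * βsd + p2 * βrd) ≤ 2 * p * βsr := by
    have h1 : p1 ≤ 2 * p := by linarith
    calc min (p1 * βsr) (p1 * βsd + p2 * βrd) ≤ p1 * βsr := min_le_left _ _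
      _ ≤ 2 * p * βsr := by nlinarith
  have hmin0 : 0 ≤ min (p1 * βsr) (p1 * βsd + p2 * βrd) := by
    apply le_min <;> positivity
  set x : ℝ := p * βsd / σ2 with hx
  have hx0 : 0 < x := by positivity
  -- RHS ≤ (1/2) logb 2 (1 + 2 p βsr / σ2)
  have hR : (1 / 2) * Real.logb 2 (1 + min (p1 * βsr) (p1 * βsd + p2 * βrd) / σ2)
      ≤ (1 / 2) * Real.logb 2 (1 + 2 * p * βsr / σ2) := by
    have harg : (1:ℝ) + min (p1 * βsr) (p1 * βsd + p2 * βrd) / σ2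
        ≤ 1 + 2 * p * βsr / σ2 := by
      gcongr
    have hpos : (0:ℝ) < 1 + min (p1 * βsr) (p1 * βsd + p2 * βrd) / σ2 := by
      have : 0 ≤ min (p1 * βsr) (p1 * βsd + p2 * βrd) / σ2 := by positivity
      linarith
    have := Real.logb_le_logb_of_le hb hpos harg
    linarith
  -- key strict inequality
  have hkey : (1/2) * Real.logb 2 (1 + 2 * p * βsr / σ2) < Real.logb 2 (1 + x) := by
    have hy : 2 * p * βsr / σ2 < 2 * x := by
      rw [hx]
      rw [div_lt_iff₀ hσ]
      have : 2 * (p * βsd / σ2) * σ2 = 2 * p * βsd := by field_simp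
      rw [this]
      nlinarith
    have hlt2 : 1 + 2 * p * βsr / σ2 < (1 + x) ^ 2 := by nlinarith
    have hpos2 : (0:ℝ) < 1 + 2 * p * βsr / σ2 := by positivity
    have := Real.logb_lt_logb hb hpos2 hlt2
    have hpow : Real.logb 2 ((1 + x) ^ 2) = 2 * Real.logb 2 (1 + x) := by
      rw [Real.logb_pow]; push_cast; ring
    rw [hpow] at this
    linarith
  -- LHS ≥ logb 2 (1 + x)
  have hL : Real.logb 2 (1 + x) ≤ Real.logb 2 (1 + p * A ^ 2 / σ2) := by
    apply Real.logb_le_logb_of_le hb (by positivity)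
    have h2 : p * βsd ≤ p * A ^ 2 := by nlinarith
    have h3 : p * βsd / σ2 ≤ p * A ^ 2 / σ2 := by gcongr
    linarith
  linarith
end

section
/- Let p > 0, σ² > 0, α > 0, β_IRS > 0, β_sd ≥ 0, β_sr > 0, β_rd > 0 with β_sd ≤ β_sr, and set D = β_sr + β_rd − β_sd (> 0). Then for every natural number N, the inequality log₂(1 + p(√β_sd + N α √β_IRS)² / σ²) > (1/2)·log₂(1 + 2p β_rd β_sr /(D σ²)) holds if and only if N > ( √( (√(1 + 2p β_rd β_sr /(D σ²)) − 1)·σ²/p ) − √β_sd ) / (α √β_IRS). -/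
/-- Proposition 2, second case: for `β_sd ≤ β_sr`, the IRS-supported rate with
`N` elements exceeds the optimized repetition-coded DF relaying rate if and
only if `N` exceeds the threshold in Eq. (14) of the paper. -/
theorem irs_beats_df_iff
    (p σ2 α βIRS βsd βsr βrd : ℝ)
    (hp : 0 < p) (hσ : 0 < σ2) (hα : 0 < α) (hIRS : 0 < βIRS)
    (hsd : 0 ≤ βsd) (hsr : 0 < βsr) (hrd : 0 < βrd) (hle : βsd ≤ βsr) :
    ∀ N : ℕ,
      Real.logb 2 (1 + p * (Real.sqrt βsd + (N : ℝ) * α * Real.sqrt βIRS) ^ 2 / σ2)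
          > (1 / 2) * Real.logb 2
              (1 + 2 * p * βrd * βsr / ((βsr + βrd - βsd) * σ2))
        ↔ (N : ℝ) >
            (Real.sqrt ((Real.sqrt (1 + 2 * p * βrd * βsr / ((βsr + βrd - βsd) * σ2))
                - 1) * σ2 / p) - Real.sqrt βsd) / (α * Real.sqrt βIRS) := by
  intro N
  have hD : 0 < βsr + βrd - βsd := by linarith
  set Q : ℝ := 2 * p * βrd * βsr / ((βsr + βrd - βsd) * σ2) with hQdef
  have hQ : 0 < Q := by positivity
  have h1Q : (0:ℝ) < 1 + Q := by linarith
  have hs1 : 1 < Real.sqrt (1 + Q) := by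
    rw [show (1:ℝ) = Real.sqrt 1 by simp]
    exact Real.sqrt_lt_sqrt (by norm_num) (by simpa using hQ)
  have hsp : 0 < Real.sqrt (1 + Q) := by linarith
  set c : ℝ := α * Real.sqrt βIRS with hc
  have hcpos : 0 < c := by positivity
  set x : ℝ := Real.sqrt βsd + (N : ℝ) * α * Real.sqrt βIRS with hxdef
  have hxnn : 0 ≤ x := by positivity
  set T : ℝ := (Real.sqrt (1 + Q) - 1) * σ2 / p with hTdef
  have hT : 0 ≤ T := by
    apply div_nonneg _ hp.le
    nlinarith
  have hA : 0 < 1 + p * x ^ 2 / σ2 := by positivity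
  have hhalf : (1 / 2 : ℝ) * Real.logb 2 (1 + Q) = Real.logb 2 (Real.sqrt (1 + Q)) := by
    rw [Real.logb, Real.logb, Real.log_sqrt h1Q.le]; ring
  rw [gt_iff_lt, hhalf, Real.logb_lt_logb_iff (by norm_num) hsp hA]
  have hdiv : p * x ^ 2 / σ2 * σ2 = p * x ^ 2 := div_mul_cancel₀ _ hσ.ne'
  have key : Real.sqrt (1 + Q) < 1 + p * x ^ 2 / σ2 ↔ T < x ^ 2 := by
    rw [hTdef, div_lt_iff₀ hp]
    constructor
    · intro h
      have h2 : Real.sqrt (1 + Q) - 1 < p * x ^ 2 / σ2 := by linarith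
      have h3 := (lt_div_iff₀ hσ).mp h2
      linarith
    · intro h
      have h2 : Real.sqrt (1 + Q) - 1 < p * x ^ 2 / σ2 :=
        (lt_div_iff₀ hσ).mpr (by linarith)
      linarith
  rw [key]
  have key2 : T < x ^ 2 ↔ Real.sqrt T < x := by
    constructor
    · intro h2
      calc Real.sqrt T < Real.sqrt (x ^ 2) := Real.sqrt_lt_sqrt hT h2
        _ = x := Real.sqrt_sq hxnn
    · intro h3
      have := Real.sq_sqrt hT
      nlinarith [Real.sqrt_nonneg T]
  rw [key2, gt_iff_lt, div_lt_iff₀ hcpos, hc, hxdef]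
  constructor <;> intro h <;> nlinarith
end

section
/- Let σ² > 0, α > 0, β_sd ≥ 0, β_sr > 0, β_rd > 0 with β_sd ≤ β_sr, D = β_sr + β_rd − β_sd, and β_IRS = β_sr β_rd. Then for every natural number N ≥ 1 there exists p₀ > 0 such that for all p ≥ p₀, log₂(1 + p(√β_sd + N α √β_IRS)² / σ²) > (1/2)·log₂(1 + 2p β_rd β_sr /(D σ²)). That is, at high SNR the IRS-supported transmission achieves a higher rate than optimized DF relaying for any fixed number of elements N ≥ 1. -/
/-- High-SNR comparison following Proposition 2 (line-of-sight case
`β_IRS = β_sr β_rd`): for any fixed number of IRS elements `N ≥ 1`, there is a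
power level `p₀ > 0` beyond which the IRS-supported transmission achieves a
higher rate than optimized repetition-coded DF relaying. -/
theorem irs_beats_df_high_snr
    (σ2 α βsd βsr βrd : ℝ)
    (hσ : 0 < σ2) (hα : 0 < α) (hsd : 0 ≤ βsd) (hsr : 0 < βsr) (hrd : 0 < βrd)
    (hle : βsd ≤ βsr) :
    ∀ N : ℕ, 1 ≤ N → ∃ p0 : ℝ, 0 < p0 ∧ ∀ p : ℝ, p0 ≤ p →
      Real.logb 2 (1 + p * (Real.sqrt βsd +
          (N : ℝ) * α * Real.sqrt (βsr * βrd)) ^ 2 / σ2)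
        > (1 / 2) * Real.logb 2
            (1 + 2 * p * βrd * βsr / ((βsr + βrd - βsd) * σ2)) := by
  intro N hN
  set s : ℝ := Real.sqrt βsd + (N : ℝ) * α * Real.sqrt (βsr * βrd) with hs
  have hD : 0 < βsr + βrd - βsd := by linarith
  have hprod : 0 < βsr * βrd := mul_pos hsr hrd
  have hNpos : (0 : ℝ) < (N : ℝ) := by exact_mod_cast Nat.pos_of_ne_zero (by omega)
  have hspos : 0 < s := by
    have h1 : 0 < (N : ℝ) * α * Real.sqrt (βsr * βrd) :=
      mul_pos (mul_pos hNpos hα) (Real.sqrt_pos.mpr hprod)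
    have h2 := Real.sqrt_nonneg βsd
    simp only [hs]; linarith
  set c : ℝ := s ^ 2 / σ2 with hc
  have hcpos : 0 < c := div_pos (pow_pos hspos 2) hσ
  set d : ℝ := 2 * βrd * βsr / ((βsr + βrd - βsd) * σ2) with hd
  have hdpos : 0 < d := div_pos (by positivity) (mul_pos hD hσ)
  refine ⟨max 1 (d / c ^ 2), lt_of_lt_of_le one_pos (le_max_left _ _), ?_⟩
  intro p hp
  have hp1 : (1 : ℝ) ≤ p := le_trans (le_max_left _ _) hp
  have hp0 : 0 < p := lt_of_lt_of_le one_pos hp1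
  have hp2 : d / c ^ 2 ≤ p := le_trans (le_max_right _ _) hp
  have hpd : d ≤ p * c ^ 2 := by rwa [div_le_iff₀ (by positivity)] at hp2
  have e1 : 1 + p * s ^ 2 / σ2 = 1 + p * c := by rw [hc]; ring
  have e2 : 1 + 2 * p * βrd * βsr / ((βsr + βrd - βsd) * σ2) = 1 + p * d := by
    rw [hd]; field_simp
  rw [e1, e2]
  have hy : (0 : ℝ) < 1 + p * d := by positivity
  have hx : (0 : ℝ) < 1 + p * c := by positivity
  have hkey : 1 + p * d < (1 + p * c) ^ 2 := by nlinarith [mul_pos hp0 hcpos]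
  have hsqrt : Real.sqrt (1 + p * d) < 1 + p * c := (Real.sqrt_lt' hx).mpr hkey
  calc (1 / 2) * Real.logb 2 (1 + p * d)
      = Real.logb 2 (Real.sqrt (1 + p * d)) := by
        rw [Real.logb, Real.logb, Real.log_sqrt hy.le]; ring
    _ < Real.logb 2 (1 + p * c) :=
        Real.logb_lt_logb one_lt_two (Real.sqrt_pos.mpr hy) hsqrt
end

section
/- Let R̄ > 0, σ² > 0, ν ∈ (0,1], α > 0, β_sd ≥ 0, β_IRS > 0, P_s ≥ 0, P_d ≥ 0, P_e > 0, and define g(x) = (2^{R̄} − 1) σ² / (ν (√β_sd + x α √β_IRS)²) + P_s + P_d + x P_e on the interval (−√β_sd/(α √β_IRS), ∞). Then x* = ( 2(2^{R̄} − 1) σ² / (ν α² β_IRS P_e) )^{1/3} − (1/α)·√(β_sd/β_IRS) lies in this interval, satisfies g'(x*) = 0, and g attains its global minimum over the interval uniquely at x*. -/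
/-- Second part of Proposition 3: on the interval `(−√β_sd/(α√β_IRS), ∞)`, the
total power `g(x) = (2^R̄ − 1)σ²/(ν(√β_sd + xα√β_IRS)²) + P_s + P_d + x P_e`
has a stationary point at
`x* = (2(2^R̄ − 1)σ²/(ν α² β_IRS P_e))^{1/3} − (1/α)√(β_sd/β_IRS)`,
which lies in the interval and is the unique global minimizer of `g` there. -/
theorem irs_total_power_minimizer
    (R σ2 ν α βsd βIRS Ps Pd Pe : ℝ)
    (hR : 0 < R) (hσ : 0 < σ2) (hν0 : 0 < ν) (hν1 : ν ≤ 1) (hα : 0 < α)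
    (hsd : 0 ≤ βsd) (hIRS : 0 < βIRS) (hPs : 0 ≤ Ps) (hPd : 0 ≤ Pd) (hPe : 0 < Pe) :
    (2 * ((2 : ℝ) ^ R - 1) * σ2 / (ν * α ^ 2 * βIRS * Pe)) ^ ((1 : ℝ) / 3)
        - (1 / α) * Real.sqrt (βsd / βIRS)
      ∈ Set.Ioi (-(Real.sqrt βsd / (α * Real.sqrt βIRS))) ∧
    deriv (fun x : ℝ => ((2 : ℝ) ^ R - 1) * σ2 /
        (ν * (Real.sqrt βsd + x * α * Real.sqrt βIRS) ^ 2) + Ps + Pd + x * Pe)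
      ((2 * ((2 : ℝ) ^ R - 1) * σ2 / (ν * α ^ 2 * βIRS * Pe)) ^ ((1 : ℝ) / 3)
        - (1 / α) * Real.sqrt (βsd / βIRS)) = 0 ∧
    (∀ x ∈ Set.Ioi (-(Real.sqrt βsd / (α * Real.sqrt βIRS))),
      x ≠ (2 * ((2 : ℝ) ^ R - 1) * σ2 / (ν * α ^ 2 * βIRS * Pe)) ^ ((1 : ℝ) / 3)
            - (1 / α) * Real.sqrt (βsd / βIRS) →
      ((2 : ℝ) ^ R - 1) * σ2 /
          (ν * (Real.sqrt βsd +
            ((2 * ((2 : ℝ) ^ R - 1) * σ2 / (ν * α ^ 2 * βIRS * Pe)) ^ ((1 : ℝ) / 3)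
              - (1 / α) * Real.sqrt (βsd / βIRS)) * α * Real.sqrt βIRS) ^ 2)
        + Ps + Pd +
        ((2 * ((2 : ℝ) ^ R - 1) * σ2 / (ν * α ^ 2 * βIRS * Pe)) ^ ((1 : ℝ) / 3)
          - (1 / α) * Real.sqrt (βsd / βIRS)) * Pe
      < ((2 : ℝ) ^ R - 1) * σ2 /
          (ν * (Real.sqrt βsd + x * α * Real.sqrt βIRS) ^ 2) + Ps + Pd + x * Pe) := by
  have h2R : (1:ℝ) < (2:ℝ) ^ R :=
    (Real.one_lt_rpow_iff_of_pos (by norm_num)).mpr (Or.inl ⟨by norm_num, hR⟩)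
  set s := Real.sqrt βsd with hs_def
  set b := Real.sqrt βIRS with hb_def
  have hb : 0 < b := Real.sqrt_pos.mpr hIRS
  have hs : 0 ≤ s := Real.sqrt_nonneg _
  have hC : 0 < ((2:ℝ)^R - 1) * σ2 := mul_pos (by linarith) hσ
  set C := ((2:ℝ)^R - 1) * σ2 with hC_def
  set B := 2 * ((2:ℝ)^R - 1) * σ2 / (ν * α ^ 2 * βIRS * Pe) with hB_def
  have hB : 0 < B := div_pos (by nlinarith) (by positivity)
  set K := B ^ ((1:ℝ)/3) with hK_def
  have hK : 0 < K := Real.rpow_pos_of_pos hB _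
  have hK3 : K ^ 3 = B := by
    rw [hK_def, ← Real.rpow_natCast (B ^ ((1:ℝ)/3)) 3, ← Real.rpow_mul hB.le]
    norm_num
  set xs := K - 1 / α * Real.sqrt (βsd / βIRS) with hxs_def
  have hsq : Real.sqrt (βsd / βIRS) = s / b := Real.sqrt_div hsd _
  set ts := s + xs * α * b with hts_def
  have hts_eq : ts = α * b * K := by
    rw [hts_def, hxs_def, hsq]
    field_simp
    ring
  have hts_pos : 0 < ts := by rw [hts_eq]; positivity
  have hts3 : ν * Pe * ts ^ 3 = 2 * C * (α * b) := by
    have hb2 : b ^ 2 = βIRS := Real.sq_sqrt hIRS.le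
    have h1 : ts ^ 3 = α ^ 3 * (b ^ 2 * b) * B := by
      rw [hts_eq, ← hK3]; ring
    rw [h1, hb2, hB_def, hC_def]
    field_simp
  refine ⟨?_, ?_, ?_⟩
  · rw [Set.mem_Ioi]
    have h4 : 0 < s + xs * α * b := hts_def ▸ hts_pos
    have h5 : -s < xs * (α * b) := by nlinarith
    have h3 : -(s / (α*b)) * (α*b) = -s := by field_simp
    have h6 : -(s/(α*b)) * (α*b) < xs * (α*b) := by rw [h3]; exact h5
    exact lt_of_mul_lt_mul_right h6 (by positivity)
  · have hu : HasDerivAt (fun x : ℝ => s + x * α * b) (α * b) xs := by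
      have := (((hasDerivAt_id xs).mul_const α).mul_const b).const_add s
      simpa using this
    have hden : HasDerivAt (fun x : ℝ => ν * (s + x * α * b) ^ 2)
        (ν * (2 * ts * (α * b))) xs := by
      have h := (hu.pow 2).const_mul ν
      refine h.congr_deriv ?_
      rw [hts_def]
      norm_num
    have hdiv : HasDerivAt (fun x : ℝ => C / (ν * (s + x * α * b) ^ 2))
        ((0 * (ν * ts ^ 2) - C * (ν * (2 * ts * (α * b)))) / (ν * ts ^ 2) ^ 2) xs := by
      exact (hasDerivAt_const xs C).div hden
        (by rw [← hts_def]; exact (mul_pos hν0 (pow_pos hts_pos 2)).ne')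
    have hg : HasDerivAt
        (fun x : ℝ => C / (ν * (s + x * α * b) ^ 2) + Ps + Pd + x * Pe)
        ((0 * (ν * ts ^ 2) - C * (ν * (2 * ts * (α * b)))) / (ν * ts ^ 2) ^ 2 + 1 * Pe) xs :=
      ((hdiv.add_const Ps).add_const Pd).add ((hasDerivAt_id xs).mul_const Pe)
    refine hg.deriv.trans ?_
    clear_value s b C B K xs ts
    field_simp [hν0.ne', hts_pos.ne']
    linear_combination hts3
  · intro x hx hxne
    rw [Set.mem_Ioi] at hx
    set t := s + x * α * b with ht_def
    have htpos : 0 < t := by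
      have h2 : -(s / (α*b)) * (α*b) < x * (α*b) :=
        mul_lt_mul_of_pos_right hx (by positivity)
      have h3 : -(s / (α*b)) * (α*b) = -s := by field_simp
      have h4 : -s < x * (α*b) := h3 ▸ h2
      have : t = s + x * α * b := ht_def
      nlinarith
    have htne : t ≠ ts := by
      intro h
      apply hxne
      have h0 : s + x * α * b = s + xs * α * b := ht_def.symm.trans (h.trans hts_def)
      have h2 : x * (α * b) = xs * (α * b) := by linear_combination h0
      exact mul_right_cancel₀ (by positivity : (0:ℝ) < α*b).ne' h2
    have hdiffx : x - xs = (t - ts) / (α * b) := by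
      rw [ht_def, hts_def, eq_div_iff (by positivity : (0:ℝ) < α*b).ne']
      ring
    have hPe_eq : Pe = 2 * C * (α * b) / (ν * ts ^ 3) := by
      rw [eq_div_iff (by positivity : (0:ℝ) < ν * ts^3).ne']
      linear_combination hts3
    clear_value s b C B K xs ts t
    have hmain : C/(ν*t^2) - C/(ν*ts^2) + (t - ts)/(α*b)*Pe
        = C * (t - ts)^2 * (2*t + ts) / (ν * t^2 * ts^3) := by
      rw [hPe_eq]
      field_simp [hν0.ne', htpos.ne', hts_pos.ne', hα.ne', hb.ne']
      ring
    have h1 : 0 < (t - ts)^2 :=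
      lt_of_le_of_ne (sq_nonneg _) (Ne.symm (pow_ne_zero 2 (sub_ne_zero.mpr htne)))
    have hposmain : 0 < C/(ν*t^2) - C/(ν*ts^2) + (t - ts)/(α*b)*Pe := by
      rw [hmain]
      exact div_pos (mul_pos (mul_pos hC h1) (by linarith)) (by positivity)
    have h5 : x*Pe - xs*Pe = (t - ts)/(α*b)*Pe := by
      rw [show x*Pe - xs*Pe = (x - xs)*Pe from by ring, hdiffx]
    linarith [hposmain, h5]
end

section
/- Let p > 0, σ² > 0, α > 0, β_sd ≥ 0, and β_IRS > 0. Then the sequence N ↦ log₂(1 + p(√β_sd + N α √β_IRS)² / σ²) − 2·log₂(N) converges, as N → ∞ over the positive integers, to log₂(p α² β_IRS / σ²). In particular, the IRS rate grows like 2 log₂ N for large N. -/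
open Filter

/-- Scaling of the IRS rate: `R_IRS(N) − 2 log₂ N → log₂(p α² β_IRS/σ²)` as
`N → ∞`, i.e., the IRS-supported rate grows like `2 log₂ N` for large `N`. -/
theorem irs_rate_scaling
    (p σ2 α βsd βIRS : ℝ)
    (hp : 0 < p) (hσ : 0 < σ2) (hα : 0 < α) (hsd : 0 ≤ βsd) (hIRS : 0 < βIRS) :
    Tendsto
      (fun N : ℕ =>
        Real.logb 2 (1 + p * (Real.sqrt βsd + (N : ℝ) * α * Real.sqrt βIRS) ^ 2 / σ2)
          - 2 * Real.logb 2 (N : ℝ))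
      atTop
      (nhds (Real.logb 2 (p * α ^ 2 * βIRS / σ2))) := by
  set a := Real.sqrt βsd with ha
  set c := α * Real.sqrt βIRS with hcdef
  have ha0 : 0 ≤ a := Real.sqrt_nonneg _
  have hc : 0 < c := mul_pos hα (Real.sqrt_pos.mpr hIRS)
  have hc2 : c ^ 2 = α ^ 2 * βIRS := by
    rw [hcdef, mul_pow, Real.sq_sqrt hIRS.le]
  set L := p * α ^ 2 * βIRS / σ2 with hL
  have hLpos : 0 < L := by
    apply div_pos _ hσ
    positivity
  set g : ℕ → ℝ := fun N => ((N : ℝ)⁻¹) ^ 2 + (p / σ2) * (a * (N : ℝ)⁻¹ + c) ^ 2 with hg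
  have h1 : Tendsto (fun N : ℕ => ((N : ℝ)⁻¹)) atTop (nhds 0) :=
    tendsto_inv_atTop_zero.comp tendsto_natCast_atTop_atTop
  have hgt : Tendsto g atTop (nhds L) := by
    have : Tendsto g atTop (nhds ((0 : ℝ) ^ 2 + (p / σ2) * (a * 0 + c) ^ 2)) :=
      (h1.pow 2).add ((((h1.const_mul a).add_const c).pow 2).const_mul (p / σ2))
    convert this using 2
    have h0 : (a * 0 + c) ^ 2 = c ^ 2 := by ring
    rw [hL, h0, hc2]
    ring
  have hcont : ContinuousAt (Real.logb 2) L := Real.continuousAt_logb hLpos.ne'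
  have hmain : Tendsto (fun N : ℕ => Real.logb 2 (g N)) atTop (nhds (Real.logb 2 L)) :=
    (hcont.tendsto).comp hgt
  apply hmain.congr'
  filter_upwards [eventually_ge_atTop 1] with N hN
  have hn : (0 : ℝ) < (N : ℝ) := by exact_mod_cast Nat.lt_of_lt_of_le Nat.zero_lt_one hN
  have hX : (0 : ℝ) < 1 + p * (a + (N : ℝ) * α * Real.sqrt βIRS) ^ 2 / σ2 := by
    have : 0 ≤ p * (a + (N : ℝ) * α * Real.sqrt βIRS) ^ 2 / σ2 := by positivity
    linarith
  have hgeq : g N = (1 + p * (a + (N : ℝ) * α * Real.sqrt βIRS) ^ 2 / σ2) / (N : ℝ) ^ 2 := by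
    rw [hg, hcdef]
    field_simp
    try ring
    try tauto
  rw [hgeq, Real.logb_div hX.ne' (by positivity), Real.logb_pow]
  push_cast
  ring
end
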